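/- arXiv:1402.0917 — 8 statements merged into one kernel-verified Lean document; each statement's English description precedes it below -/
import Mathlib

section
/- Let P₁, P₂, P₃, P₄, P₅ ∈ ℝ² be the vertices of a convex pentagon. Then the area of the convex hull of {P₁, ..., P₅} is at most √5 times the maximum, over all triples 1 ≤ i < j < k ≤ 5, of the area of the triangle with vertices Pᵢ, Pⱼ, Pₖ. -/
/-!
Label the vertices counterclockwise, by sorting them by angle as seen from a vertex that is
strictly separated from the others. Write `[abc]` for the signed area of `Q a, Q b, Q c` and `m`
for the largest triangle area. The fan from `Q 0` covers the pentagon by triangles of areas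
`x = [012]`, `y = [023]`, `z = [034]`. With `p = [013]`, `q = [024]`, `r = [014]`, the Plücker
relation `x z + r y = p q` and the identities `[124] = x + q - r`, `[134] = z + p - r` give
`x (y + z) ≤ m²` and `z (x + y) ≤ m²`. If `x + y + z > √5 m`, the first forces
`x < (√5 - 1) m / 2` (the smaller root of `t² - √5 m t + m²`), the second the same for `z`,
and then `x + y + z < √5 m` since `y ≤ m`.
-/

open MeasureTheory Set
open scoped Pointwise

/-- Positive iff `A`, `B`, `C` are in counterclockwise order. -/
noncomputable def signedArea (A B C : ℝ × ℝ) : ℝ :=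
  ((B.1 - A.1) * (C.2 - A.2) - (B.2 - A.2) * (C.1 - A.1)) / 2

lemma signedArea_rotate (A B C : ℝ × ℝ) : signedArea B C A = signedArea A B C := by
  unfold signedArea; ring

lemma signedArea_swap (A B C : ℝ × ℝ) : signedArea A C B = -signedArea A B C := by
  unfold signedArea; ring

lemma signedArea_add_smul (A B X Y : ℝ × ℝ) {s t : ℝ} (hst : s + t = 1) :
    signedArea A B (s • X + t • Y) = s * signedArea A B X + t * signedArea A B Y := by
  unfold signedArea
  simp only [Prod.fst_add, Prod.snd_add, Prod.smul_fst, Prod.smul_snd, smul_eq_mul]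
  linear_combination (B.1 * A.2 - A.1 * B.2) / 2 * hst

lemma convex_signedArea_nonneg (A B : ℝ × ℝ) : Convex ℝ {X | 0 ≤ signedArea A B X} := by
  intro X hX Y hY s t hs ht hst
  rw [mem_ofPred_eq, signedArea_add_smul A B X Y hst]
  exact add_nonneg (mul_nonneg hs hX) (mul_nonneg ht hY)

lemma signedArea_nonneg_of_mem_convexHull {A B X : ℝ × ℝ} {s : Set (ℝ × ℝ)}
    (hs : ∀ Y ∈ s, 0 ≤ signedArea A B Y) (hX : X ∈ convexHull ℝ s) :
    0 ≤ signedArea A B X :=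
  convexHull_min hs (convex_signedArea_nonneg A B) hX

lemma signedArea_nonneg_of_mem_convexHull_triangle {A B C X : ℝ × ℝ}
    (h : 0 ≤ signedArea A B C) (hX : X ∈ convexHull ℝ {A, B, C}) : 0 ≤ signedArea A B X := by
  refine signedArea_nonneg_of_mem_convexHull ?_ hX
  rintro Y (rfl | rfl | rfl)
  · exact le_of_eq (by unfold signedArea; ring)
  · exact le_of_eq (by unfold signedArea; ring)
  · exact h

lemma convexHull_triangle_eq {A B C : ℝ × ℝ} (h : 0 < signedArea A B C) :
    convexHull ℝ {A, B, C} =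
      {X | 0 ≤ signedArea X B C ∧ 0 ≤ signedArea A X C ∧ 0 ≤ signedArea A B X} := by
  apply Subset.antisymm
  · intro X hX
    refine ⟨?_, ?_, signedArea_nonneg_of_mem_convexHull_triangle h.le hX⟩
    · rw [← signedArea_rotate]
      refine signedArea_nonneg_of_mem_convexHull_triangle ?_ (by rwa [insert_comm, pair_comm] at hX)
      rw [signedArea_rotate]; exact h.le
    · rw [signedArea_rotate]
      refine signedArea_nonneg_of_mem_convexHull_triangle ?_ (by rwa [pair_comm, insert_comm] at hX)
      rw [← signedArea_rotate]; exact h.le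
  · -- the barycentric coordinates of `X` are its signed areas relative to the sides
    rintro X ⟨ha, hb, hc⟩
    have hsum : signedArea X B C + signedArea A X C + signedArea A B X = signedArea A B C := by
      unfold signedArea; ring
    have hw : ∀ i ∈ Finset.univ,
        0 ≤ ![signedArea X B C, signedArea A X C, signedArea A B X] i / signedArea A B C := by
      intro i _; fin_cases i <;> simp <;> positivity
    convert (convex_convexHull ℝ {A, B, C}).sum_mem hw
      (by simp [Fin.sum_univ_three]; field_simp; linarith)
      (z := ![A, B, C]) (fun i _ => subset_convexHull ℝ _ (by fin_cases i <;> simp))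
    simp [Fin.sum_univ_three]
    ext <;> simp <;> field_simp <;> unfold signedArea <;> ring

lemma mem_convexHull_triangle {A B C X : ℝ × ℝ} (h : 0 < signedArea A B C)
    (hA : 0 ≤ signedArea X B C) (hB : 0 ≤ signedArea A X C) (hC : 0 ≤ signedArea A B X) :
    X ∈ convexHull ℝ {A, B, C} := by
  rw [convexHull_triangle_eq h]; exact ⟨hA, hB, hC⟩

lemma volume_convexHull_unitTriangle :
    volume (convexHull ℝ {(0 : ℝ × ℝ), (1, 0), (0, 1)}) = ENNReal.ofReal (1 / 2) := by
  let S : Set (ℝ × ℝ) := {p | p.1 ∈ Icc 0 1 ∧ p.2 ∈ Icc 0 (1 - p.1)}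
  have hS : convexHull ℝ {(0 : ℝ × ℝ), (1, 0), (0, 1)} = S := by
    rw [convexHull_triangle_eq (by norm_num [signedArea])]
    ext p
    simp only [S, signedArea, mem_ofPred_eq, mem_Icc, Prod.fst_zero, Prod.snd_zero]
    ring_nf
    constructor
    · rintro ⟨h1, h2, h3⟩; refine ⟨⟨?_, ?_⟩, ?_, ?_⟩ <;> linarith
    · rintro ⟨⟨h1, h2⟩, h3, h4⟩; refine ⟨?_, ?_, ?_⟩ <;> linarith
  have hslice : ∀ x : ℝ, volume (Prod.mk x ⁻¹' S) =
      (Icc 0 1).indicator (fun x => ENNReal.ofReal (1 - x)) x := by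
    intro x
    by_cases hx : x ∈ Icc (0 : ℝ) 1
    · have : Prod.mk x ⁻¹' S = Icc 0 (1 - x) := by
        ext y; simp [S, hx.1, hx.2]
      rw [indicator_of_mem hx, this, Real.volume_Icc, sub_zero]
    · have : Prod.mk x ⁻¹' S = ∅ := by
        ext y; simp_all [S]
      rw [indicator_of_notMem hx, this, measure_empty]
  have hint : ∫ x in Icc (0 : ℝ) 1, (1 - x) = 1 / 2 := by
    rw [integral_Icc_eq_integral_Ioc, ← intervalIntegral.integral_of_le zero_le_one,
      intervalIntegral.integral_sub intervalIntegrable_const intervalIntegral.intervalIntegrable_id]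
    norm_num [integral_id]
  have hSmeas : MeasurableSet S :=
    measurableSet_region_between_cc measurable_const (by fun_prop) measurableSet_Icc
  rw [hS, Measure.volume_eq_prod, Measure.prod_apply hSmeas]
  simp_rw [hslice]
  rw [lintegral_indicator measurableSet_Icc, ← hint, ofReal_integral_eq_lintegral_ofReal]
  · exact (continuous_const.sub continuous_id).integrableOn_Icc
  · filter_upwards [ae_restrict_mem measurableSet_Icc] with x hx
    simpa using hx.2

lemma volume_convexHull_triangle (A B C : ℝ × ℝ) :
    volume (convexHull ℝ {A, B, C}) = ENNReal.ofReal |signedArea A B C| := by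
  let L : ℝ × ℝ →ₗ[ℝ] ℝ × ℝ := Matrix.toLin (Module.Basis.finTwoProd ℝ)
    (Module.Basis.finTwoProd ℝ) !![B.1 - A.1, C.1 - A.1; B.2 - A.2, C.2 - A.2]
  have hL : {A, B, C} = A +ᵥ L '' {0, (1, 0), (0, 1)} := by
    simp [L, image_insert_eq, Set.vadd_set_insert, Matrix.toLin_finTwoProd_apply,
      ← Prod.mk_sub_mk, Prod.mk_zero_zero]
  have hdet : LinearMap.det L = 2 * signedArea A B C := by
    rw [LinearMap.det_toLin, Matrix.det_fin_two_of, signedArea]; ring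
  rw [hL, convexHull_vadd, measure_vadd, ← LinearMap.image_convexHull,
    Measure.addHaar_image_linearMap, volume_convexHull_unitTriangle, hdet,
    ← ENNReal.ofReal_mul (abs_nonneg _), abs_mul, abs_two]
  ring_nf

lemma collinear_of_signedArea_eq_zero {A B C : ℝ × ℝ} (h : signedArea A B C = 0) :
    Collinear ℝ {A, B, C} := by
  rcases eq_or_ne A B with rfl | hAB
  · simpa using collinear_pair ℝ A C
  rw [collinear_iff_of_mem (p₀ := A) (by simp)]
  have hu : (B.1 - A.1) ^ 2 + (B.2 - A.2) ^ 2 ≠ 0 := by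
    intro h0
    apply hAB
    ext <;> nlinarith [sq_nonneg (B.1 - A.1), sq_nonneg (B.2 - A.2)]
  refine ⟨B - A, ?_⟩
  rintro X (rfl | rfl | rfl)
  · exact ⟨0, by simp⟩
  · exact ⟨1, by simp⟩
  · refine ⟨((B.1 - A.1) * (X.1 - A.1) + (B.2 - A.2) * (X.2 - A.2)) /
      ((B.1 - A.1) ^ 2 + (B.2 - A.2) ^ 2), ?_⟩
    unfold signedArea at h
    ext <;> simp <;> field_simp
    · linear_combination (-2 * (B.2 - A.2)) * h
    · linear_combination (2 * (B.1 - A.1)) * h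

def Counterclockwise {n : ℕ} (Q : Fin n → ℝ × ℝ) : Prop :=
  ∀ ⦃i j k⦄, i < j → j < k → 0 < signedArea (Q i) (Q j) (Q k)

lemma exists_forall_pos_of_notMem_convexHull {s : Set (ℝ × ℝ)} {O : ℝ × ℝ} (hs : s.Finite)
    (hO : O ∉ convexHull ℝ s) :
    ∃ a b : ℝ, ∀ X ∈ s, 0 < a * (X.1 - O.1) + b * (X.2 - O.2) := by
  obtain ⟨f, u, hfu, huO⟩ := geometric_hahn_banach_closed_point (convex_convexHull ℝ s)
    (hs.isCompact_convexHull ℝ).isClosed hO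
  have hf : ∀ v : ℝ × ℝ, f v = v.1 * f (1, 0) + v.2 * f (0, 1) := fun v => by
    rw [← smul_eq_mul, ← smul_eq_mul, ← map_smul, ← map_smul, ← map_add]
    simp
  refine ⟨-f (1, 0), -f (0, 1), fun X hX => ?_⟩
  have := hfu X (subset_convexHull ℝ s hX)
  rw [hf] at this huO
  linarith

/-- The tangent of the angle from `(a, b)` to `X - O`, an increasing function of that angle
on the half-plane where `0 < a (X - O).1 + b (X - O).2`. -/
noncomputable def angleKey (a b : ℝ) (O X : ℝ × ℝ) : ℝ :=
  (a * (X.2 - O.2) - b * (X.1 - O.1)) / (a * (X.1 - O.1) + b * (X.2 - O.2))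

lemma angleKey_lt_angleKey_iff {a b : ℝ} {O X Y : ℝ × ℝ}
    (hX : 0 < a * (X.1 - O.1) + b * (X.2 - O.2)) (hY : 0 < a * (Y.1 - O.1) + b * (Y.2 - O.2)) :
    angleKey a b O X < angleKey a b O Y ↔ 0 < signedArea O X Y := by
  have hab : 0 < a ^ 2 + b ^ 2 := by
    by_contra! h
    have ha : a = 0 := by nlinarith
    have hb : b = 0 := by nlinarith
    simp [ha, hb] at hX
  rw [angleKey, angleKey, div_lt_div_iff₀ hX hY, ← sub_pos]
  have : (a * (Y.2 - O.2) - b * (Y.1 - O.1)) * (a * (X.1 - O.1) + b * (X.2 - O.2)) -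
      (a * (X.2 - O.2) - b * (X.1 - O.1)) * (a * (Y.1 - O.1) + b * (Y.2 - O.2)) =
      2 * (a ^ 2 + b ^ 2) * signedArea O X Y := by
    unfold signedArea; ring
  rw [this]
  constructor <;> intro h <;> nlinarith

lemma convexIndependent_of_forall_notMem_convexHull {ι E : Type*} [AddCommGroup E] [Module ℝ E]
    {P : ι → E} (h : ∀ i, P i ∉ convexHull ℝ (P '' {j | j ≠ i})) :
    ConvexIndependent ℝ P :=
  convexIndependent_iff_notMem_convexHull_sdiff.2 fun i _ hi =>
    h i (convexHull_mono (image_mono fun _ hj => hj.2) hi)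

namespace ConvexIndependent

variable {ι : Type*} {P : ι → ℝ × ℝ}

lemma eq_or_eq_of_wbtw (hP : ConvexIndependent ℝ P) {a b c : ι}
    (h : Wbtw ℝ (P a) (P b) (P c)) : b = a ∨ b = c := by
  have := (hP.mem_convexHull_iff {a, c} b).1 (by
    rw [image_pair, convexHull_pair]; exact h.mem_segment)
  simpa using this

lemma signedArea_ne_zero (hP : ConvexIndependent ℝ P) {a b c : ι} (hab : a ≠ b) (hac : a ≠ c)
    (hbc : b ≠ c) : signedArea (P a) (P b) (P c) ≠ 0 := fun h => by
  rcases (collinear_of_signedArea_eq_zero h).wbtw_or_wbtw_or_wbtw with h | h | h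
  · rcases hP.eq_or_eq_of_wbtw h with h | h <;> simp_all
  · rcases hP.eq_or_eq_of_wbtw h with h | h <;> simp_all
  · rcases hP.eq_or_eq_of_wbtw h with h | h <;> simp_all

lemma counterclockwise_of_fan {n : ℕ} {Q : Fin (n + 1) → ℝ × ℝ} (hQ : ConvexIndependent ℝ Q)
    (hfan : ∀ ⦃j k⦄, 0 < j → j < k → 0 < signedArea (Q 0) (Q j) (Q k)) :
    Counterclockwise Q := by
  intro i j k hij hjk
  rcases (Fin.zero_le i).eq_or_lt with rfl | hi
  · exact hfan hij hjk
  by_contra! h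
  -- otherwise `Q j` lies in the triangle `Q 0, Q i, Q k`
  have hmem : Q j ∈ convexHull ℝ (Q '' {0, i, k}) := by
    rw [image_insert_eq, image_pair]
    refine mem_convexHull_triangle (hfan hi (hij.trans hjk)) ?_ (hfan (hi.trans hij) hjk).le
      (hfan hi hij).le
    rw [← signedArea_rotate, signedArea_swap]
    linarith
  have := (hQ.mem_convexHull_iff _ _).1 hmem
  simp only [mem_insert_iff, mem_singleton_iff] at this
  omega

theorem exists_perm_counterclockwise {n : ℕ} {P : Fin (n + 1) → ℝ × ℝ}
    (hP : ConvexIndependent ℝ P) :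
    ∃ σ : Equiv.Perm (Fin (n + 1)), Counterclockwise (P ∘ σ) := by
  obtain ⟨a, b, hsep⟩ := exists_forall_pos_of_notMem_convexHull (s := P '' {j | j ≠ 0})
    ((finite_range P).subset (image_subset_range _ _)) fun h => (hP.mem_convexHull_iff _ _).1 h rfl
  have hpos : ∀ i : Fin n, 0 < a * ((P i.succ).1 - (P 0).1) + b * ((P i.succ).2 - (P 0).2) :=
    fun i => hsep _ ⟨i.succ, i.succ_ne_zero, rfl⟩
  let key : Fin n → ℝ := fun i => angleKey a b (P 0) (P i.succ)
  have hkey : Function.Injective key := by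
    intro i j hij
    by_contra hne
    apply hP.signedArea_ne_zero (Fin.succ_ne_zero i).symm (Fin.succ_ne_zero j).symm
      ((Fin.succ_injective _).ne hne)
    have h1 := (angleKey_lt_angleKey_iff (hpos i) (hpos j)).not.1 hij.not_lt
    have h2 := (angleKey_lt_angleKey_iff (hpos j) (hpos i)).not.1 hij.symm.not_lt
    rw [signedArea_swap] at h2
    linarith
  let τ := Tuple.sort key
  have hτ : StrictMono (key ∘ τ) :=
    (Tuple.monotone_sort key).strictMono_of_injective (hkey.comp τ.injective)
  -- `σ 0 = 0` and `σ i.succ = (τ i).succ`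
  let σ := Equiv.Perm.decomposeFin.symm (0, τ)
  refine ⟨σ, (hP.comp_embedding σ.toEmbedding).counterclockwise_of_fan ?_⟩
  intro j k hj hjk
  obtain ⟨j, rfl⟩ := Fin.exists_succ_eq.2 hj.ne'
  obtain ⟨k, rfl⟩ := Fin.exists_succ_eq.2 (hj.trans hjk).ne'
  exact (angleKey_lt_angleKey_iff (hpos (τ j)) (hpos (τ k))).1 (hτ (Fin.succ_lt_succ_iff.1 hjk))

end ConvexIndependent

lemma lt_of_mul_sqrt_five_mul_sub_lt {m x : ℝ} (hxm : x ≤ m)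
    (h : x * (√5 * m - x) < m ^ 2) : 2 * x < (√5 - 1) * m := by
  have hs : √5 ^ 2 = 5 := Real.sq_sqrt (by norm_num)
  have hs2 : 2 < √5 := by nlinarith [Real.sqrt_nonneg 5]
  by_contra! h'
  nlinarith [mul_nonneg (sub_nonneg.2 h') (by nlinarith : 0 ≤ (√5 + 1) * m - 2 * x)]

lemma add_add_le_sqrt_five_mul {m x y z : ℝ} (hx : 0 < x) (hz : 0 < z) (hxm : x ≤ m)
    (hym : y ≤ m) (hzm : z ≤ m) (hxyz : x * (y + z) ≤ m ^ 2) (hzxy : z * (x + y) ≤ m ^ 2) :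
    x + y + z ≤ √5 * m := by
  by_contra! hc
  have hx' := lt_of_mul_sqrt_five_mul_sub_lt hxm (by nlinarith)
  have hz' := lt_of_mul_sqrt_five_mul_sub_lt hzm (by nlinarith)
  linarith

lemma mul_add_le_sq {m x y z p q r : ℝ} (hy : 0 ≤ y) (hym : y ≤ m) (hpm : p ≤ m) (hq : 0 ≤ q)
    (hqm : q ≤ m) (hqr : q ≤ m + r - x) (hplucker : x * z + r * y = p * q) :
    x * (y + z) ≤ m ^ 2 := by
  have hxyz : x * (y + z) = (x - r) * y + p * q := by linear_combination hplucker
  rw [hxyz]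
  rcases le_total x r with h | h <;> nlinarith

namespace Counterclockwise

section

variable {n : ℕ} {Q : Fin n → ℝ × ℝ}

lemma signedArea_nonneg_of_le (hQ : Counterclockwise Q) {i j k : Fin n} (hij : i ≤ j)
    (hjk : j ≤ k) : 0 ≤ signedArea (Q i) (Q j) (Q k) := by
  rcases hij.eq_or_lt with rfl | hij
  · simp [signedArea]
  rcases hjk.eq_or_lt with rfl | hjk
  · exact le_of_eq (by unfold signedArea; ring)
  exact (hQ hij hjk).le

lemma signedArea_nonneg_of_cyclic (hQ : Counterclockwise Q) {i j k : Fin n}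
    (h : i ≤ j ∧ j ≤ k ∨ j ≤ k ∧ k ≤ i ∨ k ≤ i ∧ i ≤ j) :
    0 ≤ signedArea (Q i) (Q j) (Q k) := by
  rcases h with ⟨h1, h2⟩ | ⟨h1, h2⟩ | ⟨h1, h2⟩
  · exact hQ.signedArea_nonneg_of_le h1 h2
  · rw [← signedArea_rotate]; exact hQ.signedArea_nonneg_of_le h1 h2
  · rw [signedArea_rotate]; exact hQ.signedArea_nonneg_of_le h1 h2

end

variable {Q : Fin 5 → ℝ × ℝ}

lemma convexHull_range_subset_fan (hQ : Counterclockwise Q) :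
    convexHull ℝ (range Q) ⊆ convexHull ℝ {Q 0, Q 1, Q 2} ∪ convexHull ℝ {Q 0, Q 2, Q 3} ∪
      convexHull ℝ {Q 0, Q 3, Q 4} := by
  intro X hX
  have edge : ∀ i j : Fin 5, (∀ l, i ≤ j ∧ j ≤ l ∨ j ≤ l ∧ l ≤ i ∨ l ≤ i ∧ i ≤ j) →
      0 ≤ signedArea (Q i) (Q j) X := fun i j h =>
    signedArea_nonneg_of_mem_convexHull
      (forall_mem_range.2 fun l => hQ.signedArea_nonneg_of_cyclic (h l)) hX
  have e01 := edge 0 1 (by decide)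
  have e12 := edge 1 2 (by decide)
  have e23 := edge 2 3 (by decide)
  have e34 := edge 3 4 (by decide)
  have e40 := edge 4 0 (by decide)
  rw [signedArea_rotate] at e12 e23 e34
  rcases le_or_gt (signedArea (Q 0) (Q 2) X) 0 with h2 | h2
  · refine Or.inl (Or.inl (mem_convexHull_triangle (hQ (by decide) (by decide)) e12 ?_ e01))
    rw [signedArea_swap]; linarith
  rcases le_or_gt 0 (signedArea (Q 0) (Q 3) X) with h3 | h3
  · refine Or.inr (mem_convexHull_triangle (hQ (by decide) (by decide)) e34 ?_ h3)
    rwa [signedArea_rotate]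
  · refine Or.inl (Or.inr (mem_convexHull_triangle (hQ (by decide) (by decide)) e23 ?_ h2.le))
    rw [signedArea_swap]; linarith

lemma volume_convexHull_range_le_fan_area (hQ : Counterclockwise Q) :
    volume (convexHull ℝ (range Q)) ≤ ENNReal.ofReal (signedArea (Q 0) (Q 1) (Q 2) +
      signedArea (Q 0) (Q 2) (Q 3) + signedArea (Q 0) (Q 3) (Q 4)) := by
  have h012 := hQ (i := 0) (j := 1) (k := 2) (by decide) (by decide)
  have h023 := hQ (i := 0) (j := 2) (k := 3) (by decide) (by decide)
  have h034 := hQ (i := 0) (j := 3) (k := 4) (by decide) (by decide)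
  calc volume (convexHull ℝ (range Q))
      ≤ volume (convexHull ℝ {Q 0, Q 1, Q 2}) + volume (convexHull ℝ {Q 0, Q 2, Q 3}) +
        volume (convexHull ℝ {Q 0, Q 3, Q 4}) :=
      (measure_mono hQ.convexHull_range_subset_fan).trans
        ((measure_union_le _ _).trans (add_le_add (measure_union_le _ _) le_rfl))
    _ = _ := by
      rw [volume_convexHull_triangle, volume_convexHull_triangle, volume_convexHull_triangle,
        abs_of_pos h012, abs_of_pos h023, abs_of_pos h034, ← ENNReal.ofReal_add h012.le h023.le,
        ← ENNReal.ofReal_add (by positivity) h034.le]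

lemma fan_area_le_sqrt_five_mul (hQ : Counterclockwise Q) {m : ℝ}
    (hm : ∀ ⦃i j k⦄, i < j → j < k → signedArea (Q i) (Q j) (Q k) ≤ m) :
    signedArea (Q 0) (Q 1) (Q 2) + signedArea (Q 0) (Q 2) (Q 3) + signedArea (Q 0) (Q 3) (Q 4) ≤
      √5 * m := by
  have hplucker : signedArea (Q 0) (Q 1) (Q 2) * signedArea (Q 0) (Q 3) (Q 4) +
      signedArea (Q 0) (Q 1) (Q 4) * signedArea (Q 0) (Q 2) (Q 3) =
      signedArea (Q 0) (Q 1) (Q 3) * signedArea (Q 0) (Q 2) (Q 4) := by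
    unfold signedArea; ring
  have h124 : signedArea (Q 1) (Q 2) (Q 4) = signedArea (Q 0) (Q 1) (Q 2) +
      signedArea (Q 0) (Q 2) (Q 4) - signedArea (Q 0) (Q 1) (Q 4) := by
    unfold signedArea; ring
  have h134 : signedArea (Q 1) (Q 3) (Q 4) = signedArea (Q 0) (Q 3) (Q 4) +
      signedArea (Q 0) (Q 1) (Q 3) - signedArea (Q 0) (Q 1) (Q 4) := by
    unfold signedArea; ring
  have h124m : signedArea (Q 1) (Q 2) (Q 4) ≤ m := hm (by decide) (by decide)
  have h134m : signedArea (Q 1) (Q 3) (Q 4) ≤ m := hm (by decide) (by decide)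
  set x := signedArea (Q 0) (Q 1) (Q 2)
  set y := signedArea (Q 0) (Q 2) (Q 3)
  set z := signedArea (Q 0) (Q 3) (Q 4)
  set p := signedArea (Q 0) (Q 1) (Q 3)
  set q := signedArea (Q 0) (Q 2) (Q 4)
  set r := signedArea (Q 0) (Q 1) (Q 4)
  have hx : 0 < x := hQ (by decide) (by decide)
  have hy : 0 < y := hQ (by decide) (by decide)
  have hz : 0 < z := hQ (by decide) (by decide)
  have hp : 0 < p := hQ (by decide) (by decide)
  have hq : 0 < q := hQ (by decide) (by decide)
  have hxm : x ≤ m := hm (by decide) (by decide)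
  have hym : y ≤ m := hm (by decide) (by decide)
  have hzm : z ≤ m := hm (by decide) (by decide)
  have hpm : p ≤ m := hm (by decide) (by decide)
  have hqm : q ≤ m := hm (by decide) (by decide)
  refine add_add_le_sqrt_five_mul hx hz hxm hym hzm ?_ ?_
  · exact mul_add_le_sq hy.le hym hpm hq.le hqm (by linarith) hplucker
  · rw [add_comm x]
    exact mul_add_le_sq (r := r) hy.le hym hqm hp.le hpm (by linarith)
      (by linear_combination hplucker)

lemma volume_convexHull_range_le_sqrt_five_mul (hQ : Counterclockwise Q) {M : ENNReal}
    (hM : ∀ ⦃i j k⦄, i < j → j < k → volume (convexHull ℝ {Q i, Q j, Q k}) ≤ M) :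
    volume (convexHull ℝ (range Q)) ≤ ENNReal.ofReal √5 * M := by
  rcases eq_or_ne M ⊤ with rfl | hMtop
  · rw [ENNReal.mul_top (by simp)]; exact le_top
  refine hQ.volume_convexHull_range_le_fan_area.trans ?_
  rw [← ENNReal.ofReal_toReal hMtop, ← ENNReal.ofReal_mul (Real.sqrt_nonneg 5)]
  refine ENNReal.ofReal_le_ofReal (hQ.fan_area_le_sqrt_five_mul fun i j k hij hjk => ?_)
  have := hM hij hjk
  rw [volume_convexHull_triangle, abs_of_pos (hQ hij hjk)] at this
  exact (ENNReal.ofReal_le_iff_le_toReal hMtop).1 this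

end Counterclockwise

lemma le_iSup_triple_of_ne {ι α β : Type*} [LinearOrder ι] [CompleteLattice α]
    (f : Set β → α) (P : ι → β) {a b c : ι} (hab : a ≠ b) (hac : a ≠ c) (hbc : b ≠ c) :
    f {P a, P b, P c} ≤ ⨆ (i : ι) (j : ι) (k : ι) (_ : i < j ∧ j < k), f {P i, P j, P k} := by
  have h : ∀ {i j k}, i < j → j < k → f {P i, P j, P k} ≤
      ⨆ (i : ι) (j : ι) (k : ι) (_ : i < j ∧ j < k), f {P i, P j, P k} := fun hij hjk =>
    le_iSup₂_of_le _ _ (le_iSup₂_of_le _ ⟨hij, hjk⟩ le_rfl)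
  rcases hab.lt_or_gt with hab | hab <;> rcases hbc.lt_or_gt with hbc | hbc <;>
    rcases hac.lt_or_gt with hac | hac
  · exact h hab hbc
  · exact absurd (hab.trans hbc) hac.not_gt
  · rw [pair_comm]; exact h hac hbc
  · rw [pair_comm, insert_comm]; exact h hac hab
  · rw [insert_comm]; exact h hab hac
  · rw [insert_comm, pair_comm]; exact h hbc hac
  · exact absurd (hab.trans hac) hbc.not_gt
  · rw [pair_comm, insert_comm, pair_comm]; exact h hbc hab

theorem pentagon_area_le_sqrt_five_mul_max_triangle_general
    (P : Fin 5 → ℝ × ℝ)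
    (hconv : ∀ i, P i ∉ convexHull ℝ (P '' {j | j ≠ i})) :
    volume (convexHull ℝ (Set.range P)) ≤
      ENNReal.ofReal (Real.sqrt 5) *
        ⨆ (i : Fin 5) (j : Fin 5) (k : Fin 5) (_ : i < j ∧ j < k),
          volume (convexHull ℝ ({P i, P j, P k} : Set (ℝ × ℝ))) := by
  obtain ⟨σ, hσ⟩ :=
    (convexIndependent_of_forall_notMem_convexHull hconv).exists_perm_counterclockwise
  rw [← EquivLike.range_comp P σ]
  exact hσ.volume_convexHull_range_le_sqrt_five_mul fun i j k hij hjk =>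
    le_iSup_triple_of_ne (fun s => volume (convexHull ℝ s)) P (σ.injective.ne hij.ne)
      (σ.injective.ne (hij.trans hjk).ne) (σ.injective.ne hjk.ne)

/-- The area of a convex pentagon is at most `√5` times the maximum area of a
triangle with vertices among its vertices. -/
theorem pentagon_area_le_sqrt_five_mul_max_triangle
    (P : Fin 5 → ℝ × ℝ)
    (hinj : Function.Injective P)
    (hconv : ∀ i, P i ∉ convexHull ℝ (P '' {j | j ≠ i})) :
    volume (convexHull ℝ (Set.range P)) ≤
      ENNReal.ofReal (Real.sqrt 5) *
        ⨆ (i : Fin 5) (j : Fin 5) (k : Fin 5) (_ : i < j ∧ j < k),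
          volume (convexHull ℝ ({P i, P j, P k} : Set (ℝ × ℝ))) :=
  pentagon_area_le_sqrt_five_mul_max_triangle_general P hconv
end

section
/- Consider the six points Q₁ = (0,0), Q₂ = (1,0), Q₃ = (5/6, 2/3), Q₄ = (0,1), Q₅ = (−1/4, 1), Q₆ = (−2/3, 2/3) in ℝ². The area of the convex hull of {Q₁, ..., Q₆} equals 9/8, and for every triple 1 ≤ i < j < k ≤ 6 the area of the triangle with vertices Qᵢ, Qⱼ, Qₖ is at most 1/2 (with the value 1/2 attained, e.g., by Q₁, Q₂, Q₄). Hence the bound 9/4 in the hexagon area inequality is best possible. -/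
/-!
A triangle `abc` is the image of the unit triangle under an affine map with Jacobian
`wedge (b - a) (c - a)`, and the unit triangle has area `1/2` because two images of it with
Jacobian `±1` tile the unit square; so every triangle has area `|wedge (b - a) (c - a)| / 2`,
which bounds all vertex triangles of the hexagon. The hexagon is the fan of the four triangles
`Q₁QᵢQᵢ₊₁`, of areas `1/3, 5/12, 1/8, 1/4`: a point of the hull lies on the inner side of every
edge, hence in the triangle of its sector, and consecutive triangles meet only along a ray
from `Q₁`, a null set.
-/

open MeasureTheory Set
open scoped Pointwise

noncomputable def wedge (u : ℝ × ℝ) : (ℝ × ℝ) →ₗ[ℝ] ℝ :=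
  u.1 • LinearMap.snd ℝ ℝ ℝ - u.2 • LinearMap.fst ℝ ℝ ℝ

@[simp]
lemma wedge_apply (u v : ℝ × ℝ) : wedge u v = u.1 * v.2 - u.2 * v.1 := rfl

lemma volume_setOf_wedge_eq_zero {u : ℝ × ℝ} (hu : u ≠ 0) :
    volume {p | wedge u p = 0} = 0 := by
  refine Measure.addHaar_submodule volume (LinearMap.ker (wedge u)) fun htop => hu ?_
  have h : wedge u (-u.2, u.1) = 0 := by
    rw [← LinearMap.mem_ker, htop]; trivial
  simp only [wedge_apply] at h
  have h1 : u.1 = 0 := by nlinarith [sq_nonneg u.1, sq_nonneg u.2]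
  have h2 : u.2 = 0 := by nlinarith [sq_nonneg u.1, sq_nonneg u.2]
  exact Prod.ext h1 h2

lemma convexHull_subset_setOf_le_wedge {s : Set (ℝ × ℝ)} {u : ℝ × ℝ} {c : ℝ}
    (h : ∀ x ∈ s, c ≤ wedge u x) : convexHull ℝ s ⊆ {p | c ≤ wedge u p} :=
  convexHull_min h (convex_halfSpace_ge (wedge u).isLinear c)

lemma convexHull_subset_setOf_wedge_le {s : Set (ℝ × ℝ)} {u : ℝ × ℝ} {c : ℝ}
    (h : ∀ x ∈ s, wedge u x ≤ c) : convexHull ℝ s ⊆ {p | wedge u p ≤ c} :=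
  convexHull_min h (convex_halfSpace_le (wedge u).isLinear c)

lemma volume_union_of_subset_wedge {u : ℝ × ℝ} (hu : u ≠ 0) {s t : Set (ℝ × ℝ)}
    (hs : s ⊆ {p | wedge u p ≤ 0}) (ht : t ⊆ {p | 0 ≤ wedge u p})
    (ht' : NullMeasurableSet t volume) : volume (s ∪ t) = volume s + volume t :=
  measure_union₀ ht' <| measure_mono_null (fun _ hp => le_antisymm (hs hp.1) (ht hp.2))
    (volume_setOf_wedge_eq_zero hu)

lemma nullMeasurableSet_convexHull_triple (a b c : ℝ × ℝ) :
    NullMeasurableSet (convexHull ℝ {a, b, c}) volume :=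
  ((toFinite _).isCompact_convexHull ℝ).isClosed.measurableSet.nullMeasurableSet

lemma mem_convexHull_triple_of_wedge_nonneg {a b c p : ℝ × ℝ}
    (habc : 0 < wedge (b - a) (c - a)) (ha : 0 ≤ wedge (c - b) (p - b))
    (hb : 0 ≤ wedge (a - c) (p - c)) (hc : 0 ≤ wedge (b - a) (p - a)) :
    p ∈ convexHull ℝ {a, b, c} := by
  set D := wedge (b - a) (c - a)
  -- the barycentric coordinates of `p`, by Cramer's rule
  set w : Fin 3 → ℝ :=
    ![wedge (c - b) (p - b) / D, wedge (a - c) (p - c) / D, wedge (b - a) (p - a) / D]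
  have hw : ∀ i ∈ Finset.univ, 0 ≤ w i := by
    intro i _
    fin_cases i <;> exact div_nonneg ‹_› habc.le
  have hsum : ∑ i, w i = 1 := by
    simp only [w, Fin.sum_univ_three, Fin.isValue, Matrix.cons_val]
    field_simp
    simp only [D, wedge_apply, Prod.fst_sub, Prod.snd_sub]
    ring
  have hcomb : ∑ i, w i • ![a, b, c] i = p := by
    simp only [w, Fin.sum_univ_three, Fin.isValue, Matrix.cons_val]
    ext <;> simp only [Prod.fst_add, Prod.snd_add, Prod.smul_fst, Prod.smul_snd, smul_eq_mul] <;>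
      field_simp <;> simp only [D, wedge_apply, Prod.fst_sub, Prod.snd_sub] <;> ring
  rw [← hcomb]
  refine (convex_convexHull ℝ _).sum_mem hw hsum fun i _ => subset_convexHull ℝ _ ?_
  fin_cases i <;> simp

lemma det_fst_smulRight_add_snd_smulRight (b c : ℝ × ℝ) :
    LinearMap.det ((LinearMap.fst ℝ ℝ ℝ).smulRight b + (LinearMap.snd ℝ ℝ ℝ).smulRight c) =
      wedge b c := by
  rw [← LinearMap.det_toMatrix (Module.Basis.finTwoProd ℝ), Matrix.det_fin_two]
  simp [LinearMap.toMatrix_apply]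
  ring

lemma volume_convexHull_zero_triple (b c : ℝ × ℝ) :
    volume (convexHull ℝ {0, b, c}) =
      ENNReal.ofReal |wedge b c| * volume (convexHull ℝ {(0 : ℝ × ℝ), (1, 0), (0, 1)}) := by
  set L := (LinearMap.fst ℝ ℝ ℝ).smulRight b + (LinearMap.snd ℝ ℝ ℝ).smulRight c
  have himage : L '' {(0 : ℝ × ℝ), (1, 0), (0, 1)} = {0, b, c} := by
    simp [L, image_insert_eq]
  rw [← det_fst_smulRight_add_snd_smulRight, ← Measure.addHaar_image_linearMap,
    L.image_convexHull, himage]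

lemma volume_convexHull_triple (a b c : ℝ × ℝ) :
    volume (convexHull ℝ {a, b, c}) = ENNReal.ofReal (|wedge (b - a) (c - a)| / 2) := by
  have htranslate : ({a, b, c} : Set (ℝ × ℝ)) = a +ᵥ ({0, b - a, c - a} : Set (ℝ × ℝ)) := by
    simp [vadd_set_insert]
  rw [htranslate, convexHull_vadd, measure_vadd, volume_convexHull_zero_triple,
    volume_convexHull_unitTriangle, ← ENNReal.ofReal_mul (abs_nonneg _)]
  ring_nf

noncomputable def hexagon : Fin 6 → ℝ × ℝ :=
  ![(0, 0), (1, 0), (5/6, 2/3), (0, 1), (-1/4, 1), (-2/3, 2/3)]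

def hexagonFan : Set (ℝ × ℝ) :=
  convexHull ℝ {(0, 0), (1, 0), (5/6, 2/3)} ∪ convexHull ℝ {(0, 0), (5/6, 2/3), (0, 1)} ∪
    convexHull ℝ {(0, 0), (0, 1), (-1/4, 1)} ∪ convexHull ℝ {(0, 0), (-1/4, 1), (-2/3, 2/3)}

lemma wedge_edge_le_of_mem_convexHull_hexagon {p : ℝ × ℝ}
    (hp : p ∈ convexHull ℝ (range hexagon)) (i : Fin 6) :
    wedge (hexagon (i + 1) - hexagon i) (hexagon i) ≤
      wedge (hexagon (i + 1) - hexagon i) p := by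
  refine convexHull_subset_setOf_le_wedge ?_ hp
  rintro _ ⟨j, rfl⟩
  fin_cases i <;> fin_cases j <;> simp [hexagon] <;> norm_num

lemma convexHull_hexagon_subset_fan : convexHull ℝ (range hexagon) ⊆ hexagonFan := by
  intro p hp
  have e := wedge_edge_le_of_mem_convexHull_hexagon hp
  simp [Fin.forall_fin_succ, hexagon] at e
  obtain ⟨e₀, e₁, e₂, e₃, e₄, e₅⟩ := e
  simp only [hexagonFan, mem_union]
  -- sort `p` into the four sectors cut out by the rays through `Q₃`, `Q₄`, `Q₅`
  rcases le_total (5 * p.2) (4 * p.1) with h₁ | h₁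
  · refine Or.inl (Or.inl (Or.inl ?_))
    apply mem_convexHull_triple_of_wedge_nonneg <;> norm_num <;> linarith
  rcases le_total 0 p.1 with h₂ | h₂
  · refine Or.inl (Or.inl (Or.inr ?_))
    apply mem_convexHull_triple_of_wedge_nonneg <;> norm_num <;> linarith
  rcases le_total 0 (4 * p.1 + p.2) with h₃ | h₃
  · refine Or.inl (Or.inr ?_)
    apply mem_convexHull_triple_of_wedge_nonneg <;> norm_num <;> linarith
  · refine Or.inr ?_
    apply mem_convexHull_triple_of_wedge_nonneg <;> norm_num <;> linarith

lemma hexagonFan_subset_convexHull : hexagonFan ⊆ convexHull ℝ (range hexagon) := by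
  simp only [hexagonFan, union_subset_iff]
  refine ⟨⟨⟨?_, ?_⟩, ?_⟩, ?_⟩ <;>
    exact convexHull_mono (by simp [insert_subset_iff, hexagon])

lemma volume_hexagonFan : volume hexagonFan = ENNReal.ofReal (9 / 8) := by
  rw [hexagonFan, volume_union_of_subset_wedge (u := (-1/4, 1)),
    volume_union_of_subset_wedge (u := (0, 1)), volume_union_of_subset_wedge (u := (5/6, 2/3))]
  · simp only [volume_convexHull_triple]
    rw [← ENNReal.ofReal_add, ← ENNReal.ofReal_add, ← ENNReal.ofReal_add] <;> norm_num [abs_of_pos]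
  all_goals try simp only [union_subset_iff]
  all_goals repeat' apply And.intro
  all_goals first
    | exact nullMeasurableSet_convexHull_triple _ _ _
    | exact convexHull_subset_setOf_le_wedge (by norm_num)
    | exact convexHull_subset_setOf_wedge_le (by norm_num)
    | simp [Prod.ext_iff]

lemma volume_convexHull_hexagon :
    volume (convexHull ℝ (range hexagon)) = ENNReal.ofReal (9 / 8) :=
  le_antisymm (volume_hexagonFan ▸ measure_mono convexHull_hexagon_subset_fan)
    (volume_hexagonFan ▸ measure_mono hexagonFan_subset_convexHull)

lemma abs_wedge_hexagon_le_one (i j k : Fin 6) :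
    |wedge (hexagon j - hexagon i) (hexagon k - hexagon i)| ≤ 1 := by
  fin_cases i <;> fin_cases j <;> fin_cases k <;> simp [hexagon] <;> norm_num [abs_le]

/-- Sharpness of the bound `9/4` for hexagons: for the hexagon with vertices
`(0,0), (1,0), (5/6,2/3), (0,1), (-1/4,1), (-2/3,2/3)`, the area is `9/8`,
every vertex triangle has area at most `1/2`, and the triangle `Q₁Q₂Q₄`
has area exactly `1/2`. -/
theorem hexagon_bound_sharp :
    let Q : Fin 6 → ℝ × ℝ :=
      ![(0, 0), (1, 0), (5/6, 2/3), (0, 1), (-1/4, 1), (-2/3, 2/3)]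
    volume (convexHull ℝ (Set.range Q)) = ENNReal.ofReal (9/8) ∧
    (∀ i j k : Fin 6, i < j → j < k →
      volume (convexHull ℝ ({Q i, Q j, Q k} : Set (ℝ × ℝ))) ≤ ENNReal.ofReal (1/2)) ∧
    volume (convexHull ℝ ({Q 0, Q 1, Q 3} : Set (ℝ × ℝ))) = ENNReal.ofReal (1/2) := by
  intro Q
  refine ⟨volume_convexHull_hexagon, fun i j k _ _ => ?_, ?_⟩
  · rw [volume_convexHull_triple]
    exact ENNReal.ofReal_le_ofReal
      (div_le_div_of_nonneg_right (abs_wedge_hexagon_le_one i j k) two_pos.le)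
  · rw [volume_convexHull_triple]
    simp [Q]
end

section
/- Let A be an n×n entrywise nonnegative real matrix. Then there exists an n×n entrywise nonnegative real matrix B with the same characteristic polynomial as A and with all row sums equal, i.e., there is a real number α such that for every row index i, the sum of the entries of row i of B equals α. -/
/-!
For a positive matrix `M`, maximising `r` over the compact set of pairs `(r, x)` with `x` in the
standard simplex and `r • x ≤ M *ᵥ x` produces a positive eigenvector `x` (Collatz–Wielandt);
conjugating `M` by `diagonal x` then gives a nonnegative matrix with constant row sums `ρ` and the
same characteristic polynomial. A nonnegative `A` is the limit of the positive matrices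
`A + ε`, whose eigenvalues `ρ` are bounded by their entry sums, so compactness of the bounded
nonnegative matrices with constant row sums and continuity of the characteristic polynomial
finish the proof.
-/

open Matrix Set Filter Topology

theorem isClosed_setOf_exists_forall_eq {ι X : Type*} [TopologicalSpace X] [T2Space X]
    [Nonempty ι] : IsClosed {v : ι → X | ∃ a, ∀ i, v i = a} := by
  obtain ⟨i₀⟩ := ‹Nonempty ι›
  have : {v : ι → X | ∃ a, ∀ i, v i = a} = ⋂ i, {v | v i = v i₀} := by
    ext v
    simp only [mem_iInter]
    exact ⟨fun ⟨a, ha⟩ i => (ha i).trans (ha i₀).symm, fun h => ⟨v i₀, h⟩⟩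
  rw [this]
  exact isClosed_iInter fun i => isClosed_eq (continuous_apply i) (continuous_apply i₀)

variable {ι : Type*} [Fintype ι]

theorem IsCompact.isClosed_setOf_exists_charpoly_eq [DecidableEq ι] {R : Type*} [CommRing R]
    [IsDomain R] [Infinite R] [TopologicalSpace R] [IsTopologicalRing R] [T2Space R]
    {K : Set (Matrix ι ι R)} (hK : IsCompact K) :
    IsClosed {A : Matrix ι ι R | ∃ B ∈ K, B.charpoly = A.charpoly} := by
  let g : Matrix ι ι R → R → R := fun A t => A.charpoly.eval t
  have hg : Continuous g := continuous_pi fun t => by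
    simp only [g, eval_charpoly]
    exact (continuous_const.sub continuous_id).matrix_det
  have : {A : Matrix ι ι R | ∃ B ∈ K, B.charpoly = A.charpoly} = g ⁻¹' (g '' K) := by
    ext A
    refine exists_congr fun B => and_congr_right fun _ => ?_
    exact ⟨fun h => by simp only [g, h], fun h => Polynomial.funext (congrFun h)⟩
  rw [this]
  exact (hK.image hg).isClosed.preimage hg

theorem charpoly_diagonal_inv_mul_mul_diagonal [DecidableEq ι] {K : Type*} [Field K]
    {x : ι → K} (hx : ∀ i, x i ≠ 0) (M : Matrix ι ι K) :
    (diagonal x⁻¹ * M * diagonal x).charpoly = M.charpoly := by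
  rw [charpoly_mul_comm, ← mul_assoc, diagonal_mul_diagonal]
  simp [mul_inv_cancel₀ (hx _)]

theorem sum_diagonal_inv_mul_mul_diagonal_apply [DecidableEq ι] {K : Type*} [Field K]
    (x : ι → K) (M : Matrix ι ι K) (i : ι) :
    ∑ j, (diagonal x⁻¹ * M * diagonal x) i j = (x i)⁻¹ * (M *ᵥ x) i := by
  simp [diagonal_mul, mul_diagonal, mulVec, dotProduct, Finset.mul_sum, mul_assoc]

section Nonneg

variable {M : Matrix ι ι ℝ}

theorem mulVec_pos_of_pos (hM : ∀ i j, 0 < M i j) {v : ι → ℝ} (hv : 0 ≤ v) (hv₀ : v ≠ 0)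
    (i : ι) : 0 < (M *ᵥ v) i := by
  obtain ⟨j, hj⟩ := Function.ne_iff.mp hv₀
  exact Finset.sum_pos' (fun k _ => mul_nonneg (hM i k).le (hv k))
    ⟨j, Finset.mem_univ j, mul_pos (hM i j) ((hv j).lt_of_ne' hj)⟩

theorem mul_sum_le_of_smul_le_mulVec (hM : ∀ i j, 0 ≤ M i j) {x : ι → ℝ} (hx : 0 ≤ x)
    {r : ℝ} (h : r • x ≤ M *ᵥ x) : r * ∑ j, x j ≤ (∑ i, ∑ j, M i j) * ∑ j, x j := by
  calc r * ∑ j, x j = ∑ i, (r • x) i := by simp [Finset.mul_sum]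
    _ ≤ ∑ i, ∑ j, M i j * x j := Finset.sum_le_sum fun i _ => h i
    _ ≤ ∑ i, ∑ j, M i j * ∑ k, x k := by
      gcongr with i _ j _
      · exact hM i j
      · exact Finset.single_le_sum (fun k _ => hx k) (Finset.mem_univ j)
    _ = (∑ i, ∑ j, M i j) * ∑ j, x j := by simp [Finset.sum_mul]

def collatzWielandtSet (M : Matrix ι ι ℝ) : Set (ℝ × (ι → ℝ)) :=
  {p | 0 ≤ p.1 ∧ 0 ≤ p.2 ∧ ∑ i, p.2 i = 1 ∧ p.1 • p.2 ≤ M *ᵥ p.2}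

theorem isCompact_collatzWielandtSet (hM : ∀ i j, 0 ≤ M i j) :
    IsCompact (collatzWielandtSet M) := by
  have hclosed : IsClosed (collatzWielandtSet M) :=
    (isClosed_le continuous_const continuous_fst).inter <|
      (isClosed_le continuous_const continuous_snd).inter <|
      (isClosed_eq (by fun_prop) continuous_const).inter <|
      isClosed_le (continuous_fst.smul continuous_snd)
        (continuous_const.matrix_mulVec continuous_snd)
  refine (isCompact_Icc (a := ((0 : ℝ), (0 : ι → ℝ))) (b := (∑ i, ∑ j, M i j, 1)))
    |>.of_isClosed_subset hclosed ?_
  rintro ⟨r, x⟩ ⟨hr, hx, hsum, hle⟩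
  have hr_le := mul_sum_le_of_smul_le_mulVec hM hx hle
  rw [hsum, mul_one, mul_one] at hr_le
  exact ⟨⟨hr, hx⟩, hr_le,
    fun j => (Finset.single_le_sum (fun k _ => hx k) (Finset.mem_univ j)).trans hsum.le⟩

theorem collatzWielandtSet_nonempty [Nonempty ι] (hM : ∀ i j, 0 ≤ M i j) :
    (collatzWielandtSet M).Nonempty := by
  refine ⟨(0, fun _ => (Fintype.card ι : ℝ)⁻¹), le_rfl, fun _ => by positivity, ?_, ?_⟩
  · simp
  · intro i
    simp only [zero_smul, Pi.zero_apply, mulVec, dotProduct]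
    exact Finset.sum_nonneg fun j _ => mul_nonneg (hM i j) (by positivity)

/-- Unless `(r, x)` is an eigenpair, `y = M *ᵥ x` satisfies `r • y < M *ᵥ y` strictly in every
coordinate, so a slightly larger `r` still works for `y`. -/
theorem exists_lt_fst_of_smul_ne_mulVec [Nonempty ι] (hM : ∀ i j, 0 < M i j) {r : ℝ} {x : ι → ℝ}
    (hrx : (r, x) ∈ collatzWielandtSet M) (hne : r • x ≠ M *ᵥ x) :
    ∃ p ∈ collatzWielandtSet M, r < p.1 := by
  obtain ⟨hr, hx, hsum, hle⟩ := hrx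
  have hx₀ : x ≠ 0 := by rintro rfl; simp at hsum
  set y := M *ᵥ x
  have hy : ∀ i, 0 < y i := mulVec_pos_of_pos hM hx hx₀
  have hy_lt : ∀ i, r * y i < (M *ᵥ y) i := by
    intro i
    have := mulVec_pos_of_pos hM (sub_nonneg.mpr hle) (sub_ne_zero.mpr hne.symm) i
    rw [mulVec_sub, mulVec_smul] at this
    simpa using this
  have hev : ∀ᶠ s in 𝓝 r, ∀ i, s * y i < (M *ᵥ y) i :=
    eventually_all.mpr fun i => (continuousAt_id.mul continuousAt_const).eventually_lt
      continuousAt_const (hy_lt i)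
  obtain ⟨s, hs, hrs⟩ := ((hev.filter_mono nhdsWithin_le_nhds).and self_mem_nhdsWithin).exists
    (f := 𝓝[>] r)
  have hsum_y : 0 < ∑ i, y i := Finset.sum_pos (fun i _ => hy i) Finset.univ_nonempty
  refine ⟨(s, (∑ i, y i)⁻¹ • y), ⟨hr.trans hrs.le, fun i => ?_, ?_, fun i => ?_⟩, hrs⟩
  · simpa using mul_nonneg (inv_nonneg.mpr hsum_y.le) (hy i).le
  · simp [← Finset.mul_sum, inv_mul_cancel₀ hsum_y.ne']
  · simp only [mulVec_smul, Pi.smul_apply, smul_eq_mul]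
    rw [mul_left_comm]
    exact mul_le_mul_of_nonneg_left (hs i).le (inv_nonneg.mpr hsum_y.le)

theorem exists_pos_eigenvector_of_pos [Nonempty ι] (hM : ∀ i j, 0 < M i j) :
    ∃ (ρ : ℝ) (x : ι → ℝ), (∀ i, 0 < x i) ∧ M *ᵥ x = ρ • x := by
  have hM₀ : ∀ i j, 0 ≤ M i j := fun i j => (hM i j).le
  obtain ⟨⟨ρ, x⟩, hmem, hmax⟩ := (isCompact_collatzWielandtSet hM₀).exists_isMaxOn
    (collatzWielandtSet_nonempty hM₀) continuous_fst.continuousOn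
  have heig : ρ • x = M *ᵥ x := by
    by_contra hne
    obtain ⟨p, hp, hlt⟩ := exists_lt_fst_of_smul_ne_mulVec hM hmem hne
    exact (hmax hp).not_gt hlt
  obtain ⟨hρ, hx, hsum, -⟩ := hmem
  have hx₀ : x ≠ 0 := by rintro rfl; simp at hsum
  refine ⟨ρ, x, fun i => ?_, heig.symm⟩
  have := mulVec_pos_of_pos hM hx hx₀ i
  rw [← heig] at this
  exact pos_of_mul_pos_right this hρ

theorem le_sum_of_mulVec_eq_smul [Nonempty ι] (hM : ∀ i j, 0 ≤ M i j) {x : ι → ℝ}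
    (hx : ∀ i, 0 < x i) {ρ : ℝ} (h : M *ᵥ x = ρ • x) : ρ ≤ ∑ i, ∑ j, M i j :=
  le_of_mul_le_mul_right (mul_sum_le_of_smul_le_mulVec hM (fun i => (hx i).le) h.symm.le)
    (Finset.sum_pos (fun i _ => hx i) Finset.univ_nonempty)

end Nonneg

def constRowSumBox (ι : Type*) [Fintype ι] (R : ℝ) : Set (Matrix ι ι ℝ) :=
  {B | (∀ i j, B i j ∈ Icc 0 R) ∧ ∃ α, ∀ i, ∑ j, B i j = α}

theorem isCompact_constRowSumBox [Nonempty ι] (R : ℝ) :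
    IsCompact (constRowSumBox ι R) := by
  have hbox : IsCompact {B : Matrix ι ι ℝ | ∀ i j, B i j ∈ Icc 0 R} := by
    have := isCompact_univ_pi fun _ : ι => isCompact_univ_pi fun _ : ι =>
      isCompact_Icc (a := (0 : ℝ)) (b := R)
    simp only [Set.pi, mem_univ, true_imp_iff] at this
    exact this
  exact hbox.inter_right <| isClosed_setOf_exists_forall_eq.preimage (by fun_prop)

theorem exists_charpoly_eq_mem_constRowSumBox_of_pos [DecidableEq ι] [Nonempty ι]
    {M : Matrix ι ι ℝ} (hM : ∀ i j, 0 < M i j) {R : ℝ} (hR : ∑ i, ∑ j, M i j ≤ R) :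
    ∃ B ∈ constRowSumBox ι R, B.charpoly = M.charpoly := by
  obtain ⟨ρ, x, hx, hρ⟩ := exists_pos_eigenvector_of_pos hM
  have hρR : ρ ≤ R := (le_sum_of_mulVec_eq_smul (fun i j => (hM i j).le) hx hρ).trans hR
  set B := diagonal x⁻¹ * M * diagonal x
  have hrow : ∀ i, ∑ j, B i j = ρ := fun i => by
    rw [sum_diagonal_inv_mul_mul_diagonal_apply, hρ, Pi.smul_apply, smul_eq_mul, mul_comm,
      mul_inv_cancel_right₀ (hx i).ne']
  have hB₀ : ∀ i j, 0 ≤ B i j := fun i j => by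
    simp only [B, diagonal_mul, mul_diagonal, Pi.inv_apply]
    exact mul_nonneg (mul_nonneg (inv_nonneg.mpr (hx i).le) (hM i j).le) (hx j).le
  refine ⟨B, ⟨fun i j => ⟨hB₀ i j, ?_⟩, ρ, hrow⟩,
    charpoly_diagonal_inv_mul_mul_diagonal (fun i => (hx i).ne') M⟩
  calc B i j ≤ ∑ k, B i k := Finset.single_le_sum (fun k _ => hB₀ i k) (Finset.mem_univ j)
    _ = ρ := hrow i
    _ ≤ R := hρR

/-- Every nonnegative matrix has the same characteristic polynomial as some
nonnegative matrix whose row sums are all equal. -/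
theorem nonneg_matrix_exists_const_row_sum
    (n : ℕ) (A : Matrix (Fin n) (Fin n) ℝ)
    (hA : ∀ i j, 0 ≤ A i j) :
    ∃ B : Matrix (Fin n) (Fin n) ℝ,
      (∀ i j, 0 ≤ B i j) ∧
      B.charpoly = A.charpoly ∧
      ∃ α : ℝ, ∀ i, ∑ j, B i j = α := by
  rcases isEmpty_or_nonempty (Fin n) with _ | _
  · exact ⟨A, hA, rfl, 0, isEmptyElim⟩
  set R := ∑ i, ∑ j, (A i j + 1)
  have hperturb : Tendsto (fun ε : ℝ => A + of fun _ _ => ε) (𝓝[>] 0) (𝓝 A) := by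
    have : Continuous fun ε : ℝ => A + of fun _ _ => ε := by fun_prop
    have h0 : (A + of fun _ _ => (0 : ℝ)) = A := by ext; simp
    simpa only [h0] using (this.tendsto 0).mono_left (nhdsWithin_le_nhds (s := Ioi 0))
  have hpos : ∀ᶠ ε in 𝓝[>] (0 : ℝ),
      ∃ B ∈ constRowSumBox (Fin n) R, B.charpoly = (A + of fun _ _ => ε).charpoly := by
    filter_upwards [Ioo_mem_nhdsGT one_pos] with ε ⟨hε₀, hε₁⟩
    refine exists_charpoly_eq_mem_constRowSumBox_of_pos (fun i j => ?_) ?_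
    · simpa using add_pos_of_nonneg_of_pos (hA i j) hε₀
    · exact Finset.sum_le_sum fun i _ => Finset.sum_le_sum fun j _ => by simpa using hε₁.le
  obtain ⟨B, ⟨hB, α, hα⟩, hBA⟩ :=
    (isCompact_constRowSumBox R).isClosed_setOf_exists_charpoly_eq.mem_of_tendsto hperturb hpos
  exact ⟨B, fun i j => (hB i j).1, hBA, α, hα⟩
end

section
/- Let A be an n×n complex matrix, let D be an r×r complex matrix with r ≤ n, and let X be an n×r complex matrix of rank r with A·X = X·D. Then for every r×n complex matrix C, the characteristic polynomial of A + X·C multiplied by the characteristic polynomial of D equals the characteristic polynomial of A multiplied by the characteristic polynomial of D + C·X. (Equivalently: if A has eigenvalues λ₁, ..., λₙ and D has eigenvalues λ₁, ..., λᵣ, then A + XC has eigenvalues μ₁, ..., μᵣ, λᵣ₊₁, ..., λₙ, where μ₁, ..., μᵣ are the eigenvalues of D + CX.) -/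
/-!
Over a ring in which `M = tI - A` and `N = tI - D` are invertible, `MX = XN` gives
`M⁻¹X = XN⁻¹`, so `det (M - XC) = det M * det (1 - XN⁻¹C)` and
`det (N - CX) = det (1 - CXN⁻¹) * det N`; the two middle factors agree by Sylvester's determinant
identity. The characteristic determinants are monic, hence non-zero-divisors of `R[t]`, so they
become invertible in its total ring of fractions, where the identity can be checked.
-/

open Polynomial
open scoped nonZeroDivisors

namespace Matrix

variable {m n R : Type*} [Fintype m] [DecidableEq m] [Fintype n] [CommRing R]

section Det

variable [DecidableEq n]

theorem det_sub_mul_mul_det_of_isUnit {M : Matrix m m R} {N : Matrix n n R} {U : Matrix m n R}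
    (V : Matrix n m R) (hM : IsUnit M.det) (hN : IsUnit N.det) (h : M * U = U * N) :
    (M - U * V).det * N.det = M.det * (N - V * U).det := by
  have hinv : M⁻¹ * U = U * N⁻¹ := by
    calc M⁻¹ * U = M⁻¹ * (M * U) * N⁻¹ := by
          rw [Matrix.mul_assoc, h, Matrix.mul_assoc, mul_nonsing_inv _ hN, Matrix.mul_one]
      _ = U * N⁻¹ := by rw [← Matrix.mul_assoc, nonsing_inv_mul _ hM, Matrix.one_mul]
  have hleft : M - U * V = M * (1 - M⁻¹ * U * V) := by
    rw [Matrix.mul_sub, Matrix.mul_one, ← Matrix.mul_assoc, ← Matrix.mul_assoc,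
      mul_nonsing_inv _ hM, Matrix.one_mul]
  have hright : N - V * U = (1 - V * (U * N⁻¹)) * N := by
    rw [Matrix.sub_mul, Matrix.one_mul, Matrix.mul_assoc, Matrix.mul_assoc,
      nonsing_inv_mul _ hN, Matrix.mul_one]
  rw [hleft, hright, det_mul, det_mul, hinv, det_one_sub_mul_comm]
  ring

theorem det_sub_mul_mul_det_of_mem_nonZeroDivisors {M : Matrix m m R} {N : Matrix n n R}
    {U : Matrix m n R} (V : Matrix n m R) (hM : M.det ∈ R⁰) (hN : N.det ∈ R⁰)
    (h : M * U = U * N) :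
    (M - U * V).det * N.det = M.det * (N - V * U).det := by
  apply IsFractionRing.injective R (FractionRing R)
  set f := algebraMap R (FractionRing R)
  have hM' : IsUnit (M.map f).det := RingHom.map_det f M ▸ IsLocalization.map_units _ ⟨_, hM⟩
  have hN' : IsUnit (N.map f).det := RingHom.map_det f N ▸ IsLocalization.map_units _ ⟨_, hN⟩
  have h' : M.map f * U.map f = U.map f * N.map f := by rw [← Matrix.map_mul, h, Matrix.map_mul]
  simpa only [map_mul, RingHom.map_det, RingHom.mapMatrix_apply, Matrix.map_sub _ (map_sub f),
    Matrix.map_mul] using det_sub_mul_mul_det_of_isUnit (V.map f) hM' hN' h'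

end Det

theorem charmatrix_add_mul (A : Matrix m m R) (U : Matrix m n R) (V : Matrix n m R) :
    charmatrix (A + U * V) = charmatrix A - U.map C * V.map C := by
  rw [charmatrix, charmatrix, RingHom.mapMatrix_apply, RingHom.mapMatrix_apply,
    Matrix.map_add _ (map_add C), Matrix.map_mul, sub_add_eq_sub_sub]

variable [DecidableEq n]

theorem charmatrix_mul_map_C_of_mul_eq {A : Matrix m m R} {D : Matrix n n R} {U : Matrix m n R}
    (h : A * U = U * D) : charmatrix A * U.map C = U.map C * charmatrix D := by
  rw [charmatrix, charmatrix, Matrix.sub_mul, Matrix.mul_sub, RingHom.mapMatrix_apply,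
    RingHom.mapMatrix_apply, ← Matrix.map_mul, ← Matrix.map_mul, h, scalar_apply, scalar_apply,
    ← smul_eq_diagonal_mul, ← op_smul_eq_mul_diagonal, op_smul_eq_smul]

theorem charpoly_add_mul_mul_charpoly {A : Matrix m m R} {D : Matrix n n R} {U : Matrix m n R}
    (h : A * U = U * D) (V : Matrix n m R) :
    (A + U * V).charpoly * D.charpoly = A.charpoly * (D + V * U).charpoly := by
  rw [charpoly, charpoly, charpoly, charpoly, charmatrix_add_mul, charmatrix_add_mul]
  exact det_sub_mul_mul_det_of_mem_nonZeroDivisors _ A.charpoly_monic.mem_nonZeroDivisors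
    D.charpoly_monic.mem_nonZeroDivisors (charmatrix_mul_map_C_of_mul_eq h)

end Matrix

theorem charpoly_rank_r_perturbation_general
    (n r : ℕ)
    (A : Matrix (Fin n) (Fin n) ℂ)
    (D : Matrix (Fin r) (Fin r) ℂ)
    (X : Matrix (Fin n) (Fin r) ℂ)
    (hAX : A * X = X * D)
    (C : Matrix (Fin r) (Fin n) ℂ) :
    (A + X * C).charpoly * D.charpoly = A.charpoly * (D + C * X).charpoly :=
  Matrix.charpoly_add_mul_mul_charpoly hAX C

/-- Rank-`r` perturbation of eigenvalues: if `AX = XD` with `X` of full column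
rank `r`, then for any `C`, the eigenvalues of `A + XC` are those of `D + CX`
together with the eigenvalues of `A` other than those of `D`; in terms of
characteristic polynomials,
`charpoly (A + XC) * charpoly D = charpoly A * charpoly (D + CX)`. -/
theorem charpoly_rank_r_perturbation
    (n r : ℕ) (hrn : r ≤ n)
    (A : Matrix (Fin n) (Fin n) ℂ)
    (D : Matrix (Fin r) (Fin r) ℂ)
    (X : Matrix (Fin n) (Fin r) ℂ)
    (hX : X.rank = r)
    (hAX : A * X = X * D)
    (C : Matrix (Fin r) (Fin n) ℂ) :
    (A + X * C).charpoly * D.charpoly = A.charpoly * (D + C * X).charpoly :=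
  charpoly_rank_r_perturbation_general n r A D X hAX C
end

section
/- Let u₃, v₃, u₅, v₅ be real numbers satisfying 1 ≤ u₃ + v₃, u₃ ≤ 1, 0 ≤ u₅ ≤ v₅ ≤ v₃ ≤ 1, and v₃(1 + u₅) − (1 − u₃)v₅ ≤ 1. Then u₃ + u₅ + v₃ ≤ √5. Moreover, equality holds at u₃ = 1 and u₅ = v₅ = v₃ = (√5 − 1)/2, at which point all the constraints are satisfied. -/
/-!
Put `s = u₃ + u₅`. Since `v₅ ≤ v₃` and `u₃ ≤ 1`, the last constraint gives `v₃ s ≤ 1`, while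
`u₃ ≤ 1` and `u₅ ≤ v₃` give `s ≤ 1 + v₃`. Hence `s + v₃ ≤ min (1 + 2 v₃) (v₃ + 1 / v₃)`; the first
bound increases and the second decreases on `(0, 1]`, and they cross at `v₃ = (√5 - 1) / 2`, where
both equal `√5`.
-/

open Real

lemma two_le_sqrt_five : 2 ≤ √5 := by
  rw [show (2 : ℝ) = √(2 ^ 2) by rw [sqrt_sq zero_le_two]]
  exact sqrt_le_sqrt (by norm_num)

lemma sqrt_five_le_three : √5 ≤ 3 := by
  rw [show (3 : ℝ) = √(3 ^ 2) by rw [sqrt_sq zero_le_three]]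
  exact sqrt_le_sqrt (by norm_num)

lemma sq_add_self_sqrt_five_sub_one_div_two : ((√5 - 1) / 2) ^ 2 + (√5 - 1) / 2 = 1 := by
  have h5 : √5 ^ 2 = 5 := sq_sqrt (by norm_num)
  linear_combination h5 / 4

lemma mul_add_le_one_of_mul_sub_mul_le_one {u v w x : ℝ} (hu : u ≤ 1) (hwv : w ≤ v)
    (h : v * (1 + x) - (1 - u) * w ≤ 1) : v * (u + x) ≤ 1 := by
  nlinarith [mul_le_mul_of_nonneg_left hwv (sub_nonneg.2 hu)]

lemma add_le_sqrt_five_of_mul_le_one {s v : ℝ} (hs : s ≤ 1 + v) (hv : v ≤ 1) (hvs : v * s ≤ 1) :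
    s + v ≤ √5 := by
  set c := (√5 - 1) / 2 with hc_def
  have hc : c ^ 2 + c = 1 := sq_add_self_sqrt_five_sub_one_div_two
  have h_two := two_le_sqrt_five
  rcases le_total v c with hvc | hcv
  · linarith
  · have hv0 : 0 < v := by linarith
    -- `c` and `c + 1 = 1 / c` are the roots of `X ^ 2 - √5 X + 1`.
    have hquad : v ^ 2 + 1 ≤ √5 * v := by
      nlinarith [mul_nonpos_of_nonneg_of_nonpos (sub_nonneg.2 hcv) (by linarith : v - (c + 1) ≤ 0)]
    refine le_of_mul_le_mul_left ?_ hv0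
    linarith

theorem pentagon_optimization_general
    (u₃ v₃ u₅ v₅ : ℝ)
    (h2 : u₃ ≤ 1)
    (h4 : u₅ ≤ v₅) (h5 : v₅ ≤ v₃) (h6 : v₃ ≤ 1)
    (h7 : v₃ * (1 + u₅) - (1 - u₃) * v₅ ≤ 1) :
    u₃ + u₅ + v₃ ≤ Real.sqrt 5 ∧
    ((1 : ℝ) + (Real.sqrt 5 - 1) / 2 + (Real.sqrt 5 - 1) / 2 = Real.sqrt 5 ∧
      (1 : ℝ) ≤ 1 + (Real.sqrt 5 - 1) / 2 ∧ (1 : ℝ) ≤ (1 : ℝ) ∧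
      (0 : ℝ) ≤ (Real.sqrt 5 - 1) / 2 ∧
      (Real.sqrt 5 - 1) / 2 ≤ (Real.sqrt 5 - 1) / 2 ∧
      (Real.sqrt 5 - 1) / 2 ≤ (Real.sqrt 5 - 1) / 2 ∧
      (Real.sqrt 5 - 1) / 2 ≤ 1 ∧
      ((Real.sqrt 5 - 1) / 2) * (1 + (Real.sqrt 5 - 1) / 2)
        - (1 - 1) * ((Real.sqrt 5 - 1) / 2) ≤ 1) := by
  have hbound := add_le_sqrt_five_of_mul_le_one (s := u₃ + u₅) (by linarith) h6
    (mul_add_le_one_of_mul_sub_mul_le_one h2 h5 h7)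
  have hc := sq_add_self_sqrt_five_sub_one_div_two
  have h_two := two_le_sqrt_five
  have h_three := sqrt_five_le_three
  exact ⟨by linarith, by ring, by linarith, le_rfl, by linarith, le_rfl, le_rfl, by linarith,
    by linarith⟩

/-- Pentagon case optimization: subject to the constraints,
`u₃ + u₅ + v₃ ≤ √5`, with equality at `u₃ = 1`, `u₅ = v₅ = v₃ = (√5 - 1)/2`. -/
theorem pentagon_optimization
    (u₃ v₃ u₅ v₅ : ℝ)
    (h1 : 1 ≤ u₃ + v₃) (h2 : u₃ ≤ 1)
    (h3 : 0 ≤ u₅) (h4 : u₅ ≤ v₅) (h5 : v₅ ≤ v₃) (h6 : v₃ ≤ 1)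
    (h7 : v₃ * (1 + u₅) - (1 - u₃) * v₅ ≤ 1) :
    u₃ + u₅ + v₃ ≤ Real.sqrt 5 ∧
    ((1 : ℝ) + (Real.sqrt 5 - 1) / 2 + (Real.sqrt 5 - 1) / 2 = Real.sqrt 5 ∧
      (1 : ℝ) ≤ 1 + (Real.sqrt 5 - 1) / 2 ∧ (1 : ℝ) ≤ (1 : ℝ) ∧
      (0 : ℝ) ≤ (Real.sqrt 5 - 1) / 2 ∧
      (Real.sqrt 5 - 1) / 2 ≤ (Real.sqrt 5 - 1) / 2 ∧
      (Real.sqrt 5 - 1) / 2 ≤ (Real.sqrt 5 - 1) / 2 ∧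
      (Real.sqrt 5 - 1) / 2 ≤ 1 ∧
      ((Real.sqrt 5 - 1) / 2) * (1 + (Real.sqrt 5 - 1) / 2)
        - (1 - 1) * ((Real.sqrt 5 - 1) / 2) ≤ 1) :=
  pentagon_optimization_general u₃ v₃ u₅ v₅ h2 h4 h5 h6 h7
end

section
/- Let u₁, v₁, u₂, v₂, u₃, v₃ be real numbers satisfying: 0 ≤ u₁, 0 ≤ 1 − u₁ ≤ v₁ ≤ 1, 0 ≤ u₂ ≤ v₂ ≤ 1, 0 ≤ u₃ ≤ v₃ ≤ 1, v₂ ≤ v₁, v₁ − v₂ + u₂v₁ + u₁v₂ ≤ 1, v₁ − v₃ + u₃v₁ + u₁v₃ ≤ 1, and the convexity conditions u₁ + v₁ ≥ 1, v₂ ≥ v₃, u₃v₂ ≥ u₂v₃, and u₃v₂ − u₂v₃ ≥ u₃ − u₂. Then u₁ + u₂ + v₁ + u₃v₂ − u₂v₃ − 1 ≤ 5/4 (i.e., M₃ ≤ 5/4). -/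
/-!
As `u₂ u₃ ≤ u₂ v₃` and `u₃ v₂ ≤ u₃ v₁`, `g` is at most `u₁ + v₁ + u₂ + u₃ (v₁ - u₂) - 1`,
and since `v₃ ≤ v₂ ≤ v₁` the two vertex-triangle constraints give `(u₁ + u₂) v₁ ≤ 1` and
`(u₁ + u₃) v₁ ≤ 1`. Eliminating `u₃` with the latter leaves an inequality in `u₁, v₁, u₂` which
follows from `u₂ ≤ u₂² + 1/4` together with `u₂² v₁ ≤ u₂ (1 - u₁ v₁)`.
-/

lemma add_mul_le_one_of_vertex_area_le {u u' v w : ℝ} (hu : u ≤ 1) (hwv : w ≤ v)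
    (h : v - w + u' * v + u * w ≤ 1) : (u + u') * v ≤ 1 := by
  nlinarith [mul_nonneg (sub_nonneg.2 hu) (sub_nonneg.2 hwv)]

lemma hexagon_reduced_bound {s v x y : ℝ} (hs : s ≤ 1) (hv : v ≤ 1) (hx : 0 ≤ x) (hxv : x ≤ v)
    (hsx : (s + x) * v ≤ 1) (hsy : (s + y) * v ≤ 1) :
    s + v + x + y * (v - x) ≤ 9 / 4 := by
  rcases (hx.trans hxv).eq_or_lt with rfl | hv0
  · obtain rfl : x = 0 := le_antisymm hxv hx
    linarith
  refine le_of_mul_le_mul_left ?_ hv0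
  have elim_y : v * (y * (v - x)) ≤ (1 - s * v) * (v - x) := by
    nlinarith [mul_le_mul_of_nonneg_right hsy (sub_nonneg.2 hxv)]
  have amgm : x ≤ x ^ 2 + 1 / 4 := by nlinarith [sq_nonneg (x - 1 / 2)]
  have hx2 : x ^ 2 * v ≤ x * (1 - s * v) := by nlinarith [mul_le_mul_of_nonneg_left hsx hx]
  nlinarith [mul_le_mul_of_nonneg_left amgm hv0.le,
    mul_nonneg (mul_nonneg hv0.le (sub_nonneg.2 hv)) (sub_nonneg.2 hs)]

theorem hexagon_M3_bound_general
    (u₁ v₁ u₂ v₂ u₃ v₃ : ℝ)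
    (h1u₁ : 0 ≤ 1 - u₁) (hv₁ : v₁ ≤ 1)
    (hu₂ : 0 ≤ u₂) (hu₂v₂ : u₂ ≤ v₂)
    (hu₃ : 0 ≤ u₃) (hu₃v₃ : u₃ ≤ v₃)
    (hv₂v₁ : v₂ ≤ v₁)
    (he : v₁ - v₂ + u₂ * v₁ + u₁ * v₂ ≤ 1)
    (hf : v₁ - v₃ + u₃ * v₁ + u₁ * v₃ ≤ 1)
    (hcx2 : v₃ ≤ v₂) :
    u₁ + u₂ + v₁ + u₃ * v₂ - u₂ * v₃ - 1 ≤ 5 / 4 := by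
  have hu₁' : u₁ ≤ 1 := sub_nonneg.1 h1u₁
  have h₂ := add_mul_le_one_of_vertex_area_le hu₁' hv₂v₁ he
  have h₃ := add_mul_le_one_of_vertex_area_le hu₁' (hcx2.trans hv₂v₁) hf
  calc u₁ + u₂ + v₁ + u₃ * v₂ - u₂ * v₃ - 1
      ≤ u₁ + v₁ + u₂ + u₃ * (v₁ - u₂) - 1 := by
        nlinarith [mul_le_mul_of_nonneg_left hu₃v₃ hu₂, mul_le_mul_of_nonneg_left hv₂v₁ hu₃]
    _ ≤ 9 / 4 - 1 := by
        gcongr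
        exact hexagon_reduced_bound hu₁' hv₁ hu₂ (hu₂v₂.trans hv₂v₁) h₂ h₃
    _ = 5 / 4 := by norm_num

/-- The bound `M₃ ≤ 5/4` in the hexagon case. -/
theorem hexagon_M3_bound
    (u₁ v₁ u₂ v₂ u₃ v₃ : ℝ)
    (hu₁ : 0 ≤ u₁) (h1u₁ : 0 ≤ 1 - u₁) (h1u₁v₁ : 1 - u₁ ≤ v₁) (hv₁ : v₁ ≤ 1)
    (hu₂ : 0 ≤ u₂) (hu₂v₂ : u₂ ≤ v₂) (hv₂ : v₂ ≤ 1)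
    (hu₃ : 0 ≤ u₃) (hu₃v₃ : u₃ ≤ v₃) (hv₃ : v₃ ≤ 1)
    (hv₂v₁ : v₂ ≤ v₁)
    (he : v₁ - v₂ + u₂ * v₁ + u₁ * v₂ ≤ 1)
    (hf : v₁ - v₃ + u₃ * v₁ + u₁ * v₃ ≤ 1)
    (hcx1 : 1 ≤ u₁ + v₁) (hcx2 : v₃ ≤ v₂)
    (hcx3 : u₂ * v₃ ≤ u₃ * v₂) (hcx4 : u₃ - u₂ ≤ u₃ * v₂ - u₂ * v₃) :
    u₁ + u₂ + v₁ + u₃ * v₂ - u₂ * v₃ - 1 ≤ 5 / 4 :=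
  hexagon_M3_bound_general u₁ v₁ u₂ v₂ u₃ v₃ h1u₁ hv₁ hu₂ hu₂v₂ hu₃ hu₃v₃ hv₂v₁ he hf hcx2
end

section
/- Let u₁, v, v₂ be real numbers satisfying 0 ≤ u₁ ≤ 1, 5/4 − u₁ ≤ v, v > 0, v·(u₁ + v) ≤ 1, and 1/(u₁ + v) ≤ v₂ ≤ 1. Then (u₁ + v)(1 + v₂) + (1 − u₁v₂)/v − 2 ≤ 5/4, with equality at u₁ = 5/6, v = 2/3, v₂ = 1. -/
/-!
For fixed `u₁, v` the quantity `k` is affine in `v₂`, so it is bounded by its values at the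
endpoints `v₂ = 1/s` and `v₂ = 1`, where `s = u₁ + v ≥ 1`. At `v₂ = 1` one has
`k = 2s - 1 + (1 - s)/v ≤ 3s - s² - 1 = 5/4 - (s - 3/2)²`, because `1/v ≥ s` and `1 - s ≤ 0`.
At `v₂ = 1/s` one has `k = s + 1/s - 1`; here `s² = s u₁ + s v ≤ s + 1` forces `s` below the
golden ratio `φ`, and `φ + 1/φ = √5 < 9/4`.
-/

lemma add_mul_le_max_of_mem_Icc {c d a b x : ℝ} (hx : x ∈ Set.Icc a b) :
    c + d * x ≤ max (c + d * a) (c + d * b) := by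
  rcases le_total 0 d with hd | hd
  · exact le_max_of_le_right (by nlinarith [hx.2])
  · exact le_max_of_le_left (by nlinarith [hx.1])

noncomputable def hexagonK (u₁ v₂ v : ℝ) : ℝ :=
  (u₁ + v) * (1 + v₂) + (1 - u₁ * v₂) / v - 2

section

variable {u₁ v v₂ : ℝ}

lemma hexagonK_eq_affine (hv : v ≠ 0) :
    hexagonK u₁ v₂ v = (u₁ + v - 2 + 1 / v) + (u₁ + v - u₁ / v) * v₂ := by
  unfold hexagonK
  field_simp
  ring

lemma hexagonK_le_max_of_mem_Icc {a b : ℝ} (hv : v ≠ 0) (hv₂ : v₂ ∈ Set.Icc a b) :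
    hexagonK u₁ v₂ v ≤ max (hexagonK u₁ a v) (hexagonK u₁ b v) := by
  simp only [hexagonK_eq_affine hv]
  exact add_mul_le_max_of_mem_Icc hv₂

lemma hexagonK_one_le (hv : 0 < v) (hs : 1 ≤ u₁ + v) (h : v * (u₁ + v) ≤ 1) :
    hexagonK u₁ 1 v ≤ 5 / 4 := by
  have hinv : (1 - (u₁ + v)) / v ≤ (1 - (u₁ + v)) * (u₁ + v) := by
    rw [div_le_iff₀ hv]
    nlinarith
  calc hexagonK u₁ 1 v = 2 * (u₁ + v) - 1 + (1 - (u₁ + v)) / v := by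
        unfold hexagonK
        field_simp
        ring
    _ ≤ 2 * (u₁ + v) - 1 + (1 - (u₁ + v)) * (u₁ + v) := by gcongr
    _ ≤ 5 / 4 := by nlinarith [sq_nonneg (u₁ + v - 3 / 2)]

lemma hexagonK_inv_sum (hv : v ≠ 0) (hs : u₁ + v ≠ 0) :
    hexagonK u₁ (1 / (u₁ + v)) v = u₁ + v - 1 + 1 / (u₁ + v) := by
  unfold hexagonK
  field_simp
  ring

lemma sq_le_self_add_one (hu₁ : 0 ≤ u₁) (hu₁' : u₁ ≤ 1) (hv : 0 < v) (h : v * (u₁ + v) ≤ 1) :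
    (u₁ + v) ^ 2 ≤ u₁ + v + 1 := by
  nlinarith

end

lemma sub_one_add_inv_le {s : ℝ} (hs : 1 ≤ s) (hs' : s ^ 2 ≤ s + 1) : s - 1 + 1 / s ≤ 5 / 4 := by
  rw [← sub_nonneg]
  have hs₀ : 0 < s := by linarith
  have : 5 / 4 - (s - 1 + 1 / s) = (9 * s - 4 * s ^ 2 - 4) / (4 * s) := by
    field_simp
    ring
  rw [this]
  apply div_nonneg _ (by positivity)
  nlinarith

theorem hexagon_case22_general
    (u₁ v v₂ : ℝ)
    (hu₁ : 0 ≤ u₁) (hu₁' : u₁ ≤ 1)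
    (hv : 0 < v)
    (h2 : v * (u₁ + v) ≤ 1)
    (h3 : 1 / (u₁ + v) ≤ v₂) (hv₂ : v₂ ≤ 1) :
    (u₁ + v) * (1 + v₂) + (1 - u₁ * v₂) / v - 2 ≤ 5 / 4 ∧
    ((5 / 6 + 2 / 3 : ℝ) * (1 + 1) + (1 - (5 / 6) * 1) / (2 / 3) - 2 = 5 / 4) := by
  have hs : 0 < u₁ + v := by positivity
  have hs₁ : 1 ≤ u₁ + v := by
    simpa using (one_div_le hs one_pos).1 (h3.trans hv₂)
  refine ⟨?_, by norm_num⟩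
  calc hexagonK u₁ v₂ v ≤ max (hexagonK u₁ (1 / (u₁ + v)) v) (hexagonK u₁ 1 v) :=
        hexagonK_le_max_of_mem_Icc hv.ne' ⟨h3, hv₂⟩
    _ ≤ 5 / 4 := by
        refine max_le ?_ (hexagonK_one_le hv hs₁ h2)
        rw [hexagonK_inv_sum hv.ne' hs.ne']
        exact sub_one_add_inv_le hs₁ (sq_le_self_add_one hu₁ hu₁' hv h2)

/-- Case 2.2 of the hexagon optimization: the bound `k(u₁, v₂, v) ≤ 5/4`,
with equality at `u₁ = 5/6`, `v = 2/3`, `v₂ = 1`. -/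
theorem hexagon_case22
    (u₁ v v₂ : ℝ)
    (hu₁ : 0 ≤ u₁) (hu₁' : u₁ ≤ 1)
    (h1 : 5 / 4 - u₁ ≤ v) (hv : 0 < v)
    (h2 : v * (u₁ + v) ≤ 1)
    (h3 : 1 / (u₁ + v) ≤ v₂) (hv₂ : v₂ ≤ 1) :
    (u₁ + v) * (1 + v₂) + (1 - u₁ * v₂) / v - 2 ≤ 5 / 4 ∧
    ((5 / 6 + 2 / 3 : ℝ) * (1 + 1) + (1 - (5 / 6) * 1) / (2 / 3) - 2 = 5 / 4) :=
  hexagon_case22_general u₁ v v₂ hu₁ hu₁' hv h2 h3 hv₂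
end

section
/- Let u₁, v₁, u₂, v₂, u₃, v₃ be real numbers satisfying: 0 ≤ u₁, 0 ≤ 1 − u₁ ≤ v₁ ≤ 1, 0 ≤ u₂ ≤ v₂ ≤ 1, 0 ≤ u₃ ≤ v₃ ≤ 1, the convexity conditions u₁ + v₁ ≥ 1, v₂ ≥ v₃, u₃v₂ ≥ u₂v₃, u₃v₂ − u₂v₃ ≥ u₃ − u₂, and the triangle-area conditions u₂v₁ + u₁v₂ ≤ 1, u₃v₁ + u₁v₃ ≤ 1, v₁ − v₂ + u₂v₁ + u₁v₂ ≤ 1, and v₁ − v₃ + u₃v₁ + u₁v₃ ≤ 1. Then u₁ + u₂ + v₁ + u₃v₂ − u₂v₃ − 1 ≤ 5/4. -/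
/-!
Write `a = 1 - u₁`, so that `g = (v₁ - a) + u₂ (1 - v₃) + u₃ v₂` is linear in `u₂` and `u₃`.
Since `u₂ ≤ v₂` and `u₃ ≤ v₃` we always have `g ≤ v₁ - a + v₂`, which settles the case
`v₁ - a + v₂ ≤ 5/4`. Otherwise the area conditions bound `u₂ v₁` and `u₃ v₁`, and for fixed
`(a, v₁, v₂)` the resulting bound on `g` is a concave piecewise linear function of `v₃`.
Adding two of the constraints on `u₃` with the weights that cancel the coefficient of `v₃`
(the dual certificate at the kink) leaves a polynomial inequality in `a, v₁, v₂` alone.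
Which two constraints meet at the kink depends only on whether `v₂ ≤ v₁` and on the sign of
`v₁ (1 + v₁ - a) - 1`, giving three regimes.
-/

namespace HexagonBound

variable {a v₁ v₂ v₃ u₂ u₃ : ℝ}

/-! The values of the bound at the kink, cleared of denominators. The kink lies at
`v₃ = (1 - v₁) / (v₁ - a)` in the first two regimes and at `v₃ = 1 / (1 + v₁ - a)` in the third. -/

lemma kink_value_le_of_v₂_le_v₁ (ha : 0 ≤ a) (h21 : v₂ ≤ v₁) (hv₁ : v₁ ≤ 1)
    (hR : 5 / 4 ≤ v₁ + v₂ - a) :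
    v₁ * (v₁ - a) ^ 2 + (v₁ - a) * (1 - v₁ + a * v₂) + (1 - v₁) * (v₂ * (v₁ - a) - (1 - v₁))
      ≤ 5 / 4 * (v₁ * (v₁ - a)) := by
  nlinarith [mul_nonneg (mul_nonneg (by linarith : (0:ℝ) ≤ v₁ - a)
      (by linarith : (0:ℝ) ≤ 1 + a - v₁)) (sub_nonneg.2 h21),
    sq_nonneg (3 * v₁ - 2), mul_nonneg ha (sub_nonneg.2 hv₁), mul_nonneg ha ha]

lemma kink_value_le_of_one_le (ha : 0 ≤ a) (h12 : v₁ ≤ v₂) (hv₂ : v₂ ≤ 1)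
    (hR : 5 / 4 ≤ v₁ + v₂ - a) (hkink : 1 ≤ v₁ * (1 + v₁ - a)) :
    v₁ * (v₁ - a) ^ 2 + (v₁ - a) * (1 - v₂ + a * v₂) + (1 - v₁) * (v₂ * (v₁ - a) - (1 - v₂))
      ≤ 5 / 4 * (v₁ * (v₁ - a)) := by
  nlinarith [mul_nonneg (sub_nonneg.2 hv₂) (sq_nonneg (3 * v₁ - 2)),
    mul_nonneg ha (by linarith : (0:ℝ) ≤ 1 - v₁),
    mul_nonneg (by linarith : (0:ℝ) ≤ v₁ - a) (sub_nonneg.2 h12)]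

lemma kink_value_le_of_le_one (ha : 0 ≤ a) (hv₂ : v₂ ≤ 1) (hR : 5 / 4 ≤ v₁ + v₂ - a)
    (hkink : v₁ * (1 + v₁ - a) ≤ 1) :
    v₁ * (v₁ - a) * (1 + v₁ - a) + (1 + v₁ - a) * (1 - v₂ + a * v₂) + (v₂ * (1 + v₁ - a) - 1)
      ≤ 5 / 4 * (v₁ * (1 + v₁ - a)) := by
  nlinarith [mul_nonneg (mul_nonneg ha (by linarith : (0:ℝ) ≤ 1 + v₁ - a)) (sub_nonneg.2 hv₂),
    sq_nonneg (v₁ - a - 1 / 2)]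

lemma bound_of_v₂_le_v₁ (ha : 0 ≤ a) (h21 : v₂ ≤ v₁) (hv₁ : v₁ ≤ 1) (hv₃ : v₃ ≤ 1)
    (hR : 5 / 4 ≤ v₁ + v₂ - a) (hu₃v₃ : u₃ ≤ v₃)
    (hu₂ : u₂ * v₁ ≤ 1 - v₁ + a * v₂) (hu₃ : u₃ * v₁ ≤ 1 - v₁ + a * v₃) :
    v₁ - a + u₂ * (1 - v₃) + u₃ * v₂ ≤ 5 / 4 := by
  have hw : 0 < v₁ - a := by linarith
  have hv₁pos : 0 < v₁ := by linarith
  have hweight : 1 - v₁ ≤ v₂ * (v₁ - a) := by nlinarith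
  refine le_of_mul_le_mul_left ?_ (mul_pos hv₁pos hw)
  linear_combination kink_value_le_of_v₂_le_v₁ ha h21 hv₁ hR
    + mul_nonneg (mul_nonneg hw.le (sub_nonneg.2 hv₃)) (sub_nonneg.2 hu₂)
    + mul_nonneg (mul_nonneg (sub_nonneg.2 hv₁) hv₁pos.le) (sub_nonneg.2 hu₃v₃)
    + mul_nonneg (sub_nonneg.2 hweight) (sub_nonneg.2 hu₃)

lemma bound_of_one_le (ha : 0 ≤ a) (h12 : v₁ ≤ v₂) (hv₂ : v₂ ≤ 1) (hv₃ : v₃ ≤ 1)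
    (hR : 5 / 4 ≤ v₁ + v₂ - a) (hkink : 1 ≤ v₁ * (1 + v₁ - a)) (hu₃v₃ : u₃ ≤ v₃)
    (hu₂ : u₂ * v₁ ≤ 1 - v₂ + a * v₂) (hu₃ : u₃ * v₁ ≤ 1 - v₁ + a * v₃) :
    v₁ - a + u₂ * (1 - v₃) + u₃ * v₂ ≤ 5 / 4 := by
  have hw : 0 < v₁ - a := by linarith
  have hv₁pos : 0 < v₁ := by linarith
  have hweight : 1 - v₂ ≤ v₂ * (v₁ - a) := by nlinarith
  refine le_of_mul_le_mul_left ?_ (mul_pos hv₁pos hw)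
  linear_combination kink_value_le_of_one_le ha h12 hv₂ hR hkink
    + mul_nonneg (mul_nonneg hw.le (sub_nonneg.2 hv₃)) (sub_nonneg.2 hu₂)
    + mul_nonneg (mul_nonneg (sub_nonneg.2 hv₂) hv₁pos.le) (sub_nonneg.2 hu₃v₃)
    + mul_nonneg (sub_nonneg.2 hweight) (sub_nonneg.2 hu₃)

lemma bound_of_le_one (ha : 0 ≤ a) (h12 : v₁ ≤ v₂) (hv₂ : v₂ ≤ 1) (hav : a ≤ v₁) (hv₃ : v₃ ≤ 1)
    (hR : 5 / 4 ≤ v₁ + v₂ - a) (hkink : v₁ * (1 + v₁ - a) ≤ 1) (hu₃v₃ : u₃ ≤ v₃)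
    (hu₂ : u₂ * v₁ ≤ 1 - v₂ + a * v₂) (hu₃ : u₃ * v₁ ≤ 1 - v₃ + a * v₃) :
    v₁ - a + u₂ * (1 - v₃) + u₃ * v₂ ≤ 5 / 4 := by
  have hw : 0 < 1 + v₁ - a := by linarith
  have hv₁pos : 0 < v₁ := by linarith
  have hweight : 1 ≤ v₂ * (1 + v₁ - a) := by nlinarith
  refine le_of_mul_le_mul_left ?_ (mul_pos hv₁pos hw)
  linear_combination kink_value_le_of_le_one ha hv₂ hR hkink
    + mul_nonneg (mul_nonneg hw.le (sub_nonneg.2 hv₃)) (sub_nonneg.2 hu₂)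
    + mul_nonneg hv₁pos.le (sub_nonneg.2 hu₃v₃)
    + mul_nonneg (sub_nonneg.2 hweight) (sub_nonneg.2 hu₃)

end HexagonBound

open HexagonBound in
theorem hexagon_M_bound_general
    (u₁ v₁ u₂ v₂ u₃ v₃ : ℝ)
    (h1u₁ : 0 ≤ 1 - u₁) (h1u₁v₁ : 1 - u₁ ≤ v₁) (hv₁ : v₁ ≤ 1)
    (hu₂ : 0 ≤ u₂) (hu₂v₂ : u₂ ≤ v₂) (hv₂ : v₂ ≤ 1)
    (hu₃v₃ : u₃ ≤ v₃) (hv₃ : v₃ ≤ 1)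
    (hc : u₂ * v₁ + u₁ * v₂ ≤ 1)
    (hd : u₃ * v₁ + u₁ * v₃ ≤ 1)
    (he : v₁ - v₂ + u₂ * v₁ + u₁ * v₂ ≤ 1)
    (hf : v₁ - v₃ + u₃ * v₁ + u₁ * v₃ ≤ 1) :
    u₁ + u₂ + v₁ + u₃ * v₂ - u₂ * v₃ - 1 ≤ 5 / 4 := by
  suffices v₁ - (1 - u₁) + u₂ * (1 - v₃) + u₃ * v₂ ≤ 5 / 4 by linarith
  rcases le_or_gt (v₁ + v₂ - (1 - u₁)) (5 / 4) with hsmall | hR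
  · have hweights : u₂ * (1 - v₃) + u₃ * v₂ ≤ v₂ := by
      nlinarith [mul_nonneg (sub_nonneg.2 hu₂v₂) (sub_nonneg.2 hv₃),
        mul_nonneg (sub_nonneg.2 hu₃v₃) (hu₂.trans hu₂v₂)]
    linarith
  rcases le_total v₂ v₁ with h21 | h12
  · exact bound_of_v₂_le_v₁ h1u₁ h21 hv₁ hv₃ hR.le hu₃v₃ (by linarith) (by linarith)
  rcases le_total 1 (v₁ * (1 + v₁ - (1 - u₁))) with hkink | hkink
  · exact bound_of_one_le h1u₁ h12 hv₂ hv₃ hR.le hkink hu₃v₃ (by linarith) (by linarith)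
  · exact bound_of_le_one h1u₁ h12 hv₂ h1u₁v₁ hv₃ hR.le hkink hu₃v₃ (by linarith) (by linarith)

/-- The combined bound `M ≤ 5/4` for the hexagon case. -/
theorem hexagon_M_bound
    (u₁ v₁ u₂ v₂ u₃ v₃ : ℝ)
    (hu₁ : 0 ≤ u₁) (h1u₁ : 0 ≤ 1 - u₁) (h1u₁v₁ : 1 - u₁ ≤ v₁) (hv₁ : v₁ ≤ 1)
    (hu₂ : 0 ≤ u₂) (hu₂v₂ : u₂ ≤ v₂) (hv₂ : v₂ ≤ 1)
    (hu₃ : 0 ≤ u₃) (hu₃v₃ : u₃ ≤ v₃) (hv₃ : v₃ ≤ 1)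
    (hcx1 : 1 ≤ u₁ + v₁) (hcx2 : v₃ ≤ v₂)
    (hcx3 : u₂ * v₃ ≤ u₃ * v₂) (hcx4 : u₃ - u₂ ≤ u₃ * v₂ - u₂ * v₃)
    (hc : u₂ * v₁ + u₁ * v₂ ≤ 1)
    (hd : u₃ * v₁ + u₁ * v₃ ≤ 1)
    (he : v₁ - v₂ + u₂ * v₁ + u₁ * v₂ ≤ 1)
    (hf : v₁ - v₃ + u₃ * v₁ + u₁ * v₃ ≤ 1) :
    u₁ + u₂ + v₁ + u₃ * v₂ - u₂ * v₃ - 1 ≤ 5 / 4 :=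
  hexagon_M_bound_general u₁ v₁ u₂ v₂ u₃ v₃ h1u₁ h1u₁v₁ hv₁ hu₂ hu₂v₂ hv₂ hu₃v₃ hv₃ hc hd he hf
end
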